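/- arXiv:2005.06533 — 8 statements merged into one kernel-verified Lean document; each statement's English description precedes it below -/
import Mathlib

section
/- A lattice L is distributive if and only if for all a ≤ b in L there exists a join-endomorphism f : L → L with f(b) = a and f(x) ≤ x for all x. -/
/-! A join-preserving map is monotone, so a deflationary one with `f b = a` sends every `c ≤ b`
below `a ⊓ c`. Taking `b ⊔ c` for `b` and `a ⊓ (b ⊔ c)` for `a` gives
`a ⊓ (b ⊔ c) = f b ⊔ f c ≤ (a ⊓ b) ⊔ (a ⊓ c)`, the nontrivial half of distributivity.
Conversely, in a distributive lattice `x ↦ a ⊓ x` is such a map. -/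

section DeflationaryJoinEndomorphism

variable {α : Type*} [Lattice α] {f : α → α}

lemma map_le_map_inf_of_le (hsup : ∀ x y, f (x ⊔ y) = f x ⊔ f y) (hle : ∀ x, f x ≤ x)
    {b c : α} (hcb : c ≤ b) : f c ≤ f b ⊓ c :=
  le_inf (Monotone.of_map_sup hsup hcb) (hle c)

lemma inf_sup_le_of_map_sup_eq (hsup : ∀ x y, f (x ⊔ y) = f x ⊔ f y) (hle : ∀ x, f x ≤ x)
    {a b c : α} (hf : f (b ⊔ c) = a ⊓ (b ⊔ c)) : a ⊓ (b ⊔ c) ≤ a ⊓ b ⊔ a ⊓ c :=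
  calc a ⊓ (b ⊔ c) = f b ⊔ f c := by rw [← hf, hsup]
    _ ≤ a ⊓ (b ⊔ c) ⊓ b ⊔ a ⊓ (b ⊔ c) ⊓ c := by
      rw [← hf]
      exact sup_le_sup (map_le_map_inf_of_le hsup hle le_sup_left)
        (map_le_map_inf_of_le hsup hle le_sup_right)
    _ ≤ a ⊓ b ⊔ a ⊓ c :=
      sup_le_sup (inf_le_inf_right b inf_le_left) (inf_le_inf_right c inf_le_left)

end DeflationaryJoinEndomorphism

theorem distributive_iff_join_endomorphism {α : Type*} [Lattice α] :
    (∀ a b c : α, a ⊓ (b ⊔ c) = (a ⊓ b) ⊔ (a ⊓ c)) ↔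
    (∀ a b : α, a ≤ b → ∃ f : α → α,
      (∀ x y : α, f (x ⊔ y) = f x ⊔ f y) ∧ f b = a ∧ ∀ x : α, f x ≤ x) := by
  constructor
  · intro hdistrib a b hab
    exact ⟨(a ⊓ ·), hdistrib a, inf_eq_left.mpr hab, fun _ => inf_le_right⟩
  · intro hendo a b c
    obtain ⟨f, hsup, hf, hle⟩ := hendo (a ⊓ (b ⊔ c)) (b ⊔ c) inf_le_right
    exact le_antisymm (inf_sup_le_of_map_sup_eq hsup hle hf) le_inf_sup
end

section
/- If a residuated lattice satisfies the left prelinearity law (x\y ∧ e) ∨ (y\x ∧ e) = e, then it satisfies (y ∧ z)\x = (y\x) ∨ (z\x). -/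
/-! Write `u = y\z ∧ e`, `v = z\y ∧ e`. Since `y u ≤ y ∧ z`, we get `u ≤ y\(y ∧ z)`, so
`u ((y ∧ z)\x) ≤ (y\(y ∧ z))((y ∧ z)\x) ≤ y\x`, and symmetrically `v ((y ∧ z)\x) ≤ z\x`.
Multiplication distributes over joins, so prelinearity `u ∨ v = e` gives
`(y ∧ z)\x = (u ∨ v)((y ∧ z)\x) ≤ y\x ∨ z\x`; the reverse inequality is antitonicity of `\`. -/

/-- A residuated lattice: a lattice-ordered monoid with left and right residuals. -/
class ResiduatedLattice (α : Type*) extends Lattice α, Monoid α where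
  /-- `ldiv a c` is `a \ c`. -/
  ldiv : α → α → α
  /-- `rdiv c b` is `c / b`. -/
  rdiv : α → α → α
  mul_le_iff_le_rdiv : ∀ a b c : α, a * b ≤ c ↔ a ≤ rdiv c b
  mul_le_iff_le_ldiv : ∀ a b c : α, a * b ≤ c ↔ b ≤ ldiv a c

open ResiduatedLattice

namespace ResiduatedLattice

variable {α : Type*} [ResiduatedLattice α]

theorem mul_ldiv_le (a c : α) : a * ldiv a c ≤ c :=
  (mul_le_iff_le_ldiv a _ c).mpr le_rfl

instance : MulLeftMono α :=
  ⟨fun c a b h => (mul_le_iff_le_ldiv c a _).mpr (h.trans ((mul_le_iff_le_ldiv c b _).mp le_rfl))⟩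

instance : MulRightMono α :=
  ⟨fun c a b h => (mul_le_iff_le_rdiv a c _).mpr (h.trans ((mul_le_iff_le_rdiv b c _).mp le_rfl))⟩

theorem sup_mul_eq (a b c : α) : (a ⊔ b) * c = a * c ⊔ b * c := by
  refine le_antisymm ((mul_le_iff_le_rdiv _ _ _).mpr (sup_le ?_ ?_)) ?_
  · exact (mul_le_iff_le_rdiv _ _ _).mp le_sup_left
  · exact (mul_le_iff_le_rdiv _ _ _).mp le_sup_right
  · exact sup_le (mul_le_mul_left le_sup_left c) (mul_le_mul_left le_sup_right c)

theorem ldiv_le_ldiv_left {a b : α} (h : a ≤ b) (c : α) : ldiv b c ≤ ldiv a c :=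
  (mul_le_iff_le_ldiv _ _ _).mp ((mul_le_mul_left h _).trans (mul_ldiv_le b c))

theorem ldiv_mul_ldiv_le (a b c : α) : ldiv a b * ldiv b c ≤ ldiv a c := by
  rw [← mul_le_iff_le_ldiv, ← mul_assoc]
  exact (mul_le_mul_left (mul_ldiv_le a b) _).trans (mul_ldiv_le b c)

theorem ldiv_inf_one_le_ldiv_inf (a b : α) : ldiv a b ⊓ 1 ≤ ldiv a (a ⊓ b) := by
  rw [← mul_le_iff_le_ldiv]
  refine le_inf ?_ ?_
  · simpa using mul_le_mul_right (inf_le_right : ldiv a b ⊓ 1 ≤ 1) a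
  · exact (mul_le_mul_right inf_le_left a).trans (mul_ldiv_le a b)

theorem ldiv_inf_one_mul_ldiv_inf_le (a b c : α) :
    (ldiv a b ⊓ 1) * ldiv (a ⊓ b) c ≤ ldiv a c :=
  (mul_le_mul_left (ldiv_inf_one_le_ldiv_inf a b) _).trans (ldiv_mul_ldiv_le a _ c)

end ResiduatedLattice

theorem lpl_implies_lpl2 {α : Type*} [ResiduatedLattice α]
    (hLPL : ∀ x y : α, (ldiv x y ⊓ 1) ⊔ (ldiv y x ⊓ 1) = 1) (x y z : α) :
    ldiv (y ⊓ z) x = ldiv y x ⊔ ldiv z x := by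
  refine le_antisymm ?_ <|
    sup_le (ldiv_le_ldiv_left inf_le_left x) (ldiv_le_ldiv_left inf_le_right x)
  calc ldiv (y ⊓ z) x = ((ldiv y z ⊓ 1) ⊔ (ldiv z y ⊓ 1)) * ldiv (y ⊓ z) x := by
        rw [hLPL, one_mul]
    _ = (ldiv y z ⊓ 1) * ldiv (y ⊓ z) x ⊔ (ldiv z y ⊓ 1) * ldiv (z ⊓ y) x := by
        rw [sup_mul_eq, inf_comm z y]
    _ ≤ ldiv y x ⊔ ldiv z x :=
        sup_le_sup (ldiv_inf_one_mul_ldiv_inf_le y z x) (ldiv_inf_one_mul_ldiv_inf_le z y x)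
end

section
/- In a residuated lattice satisfying e ∧ (y ∨ z) = (e ∧ y) ∨ (e ∧ z), the equation x\(y ∨ z) = (x\y) ∨ (x\z) implies the left prelinearity law (x\y ∧ e) ∨ (y\x ∧ e) = e. -/
open ResiduatedLattice

namespace ResiduatedLattice

variable {α : Type*} [ResiduatedLattice α]

instance inst_s9 : MulRightMono α where
  elim c a b hab :=
    (mul_le_iff_le_rdiv a c (b * c)).mpr (hab.trans ((mul_le_iff_le_rdiv b c (b * c)).mp le_rfl))

theorem ldiv_le_ldiv_of_le {a b : α} (hab : a ≤ b) (c : α) : ldiv b c ≤ ldiv a c :=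
  (mul_le_iff_le_ldiv a (ldiv b c) c).mp ((mul_le_mul_left hab _).trans (mul_ldiv_le b c))

theorem one_le_ldiv_self (a : α) : 1 ≤ ldiv a a :=
  (mul_le_iff_le_ldiv a 1 a).mp (mul_one a).le

theorem one_le_ldiv_sup_ldiv (hLPL3 : ∀ x y z : α, ldiv x (y ⊔ z) = ldiv x y ⊔ ldiv x z)
    (x y : α) : 1 ≤ ldiv x y ⊔ ldiv y x :=
  calc (1 : α) ≤ ldiv (x ⊔ y) (x ⊔ y) := one_le_ldiv_self _
    _ = ldiv (x ⊔ y) x ⊔ ldiv (x ⊔ y) y := hLPL3 _ _ _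
    _ ≤ ldiv y x ⊔ ldiv x y :=
        sup_le_sup (ldiv_le_ldiv_of_le le_sup_right x) (ldiv_le_ldiv_of_le le_sup_left y)
    _ = ldiv x y ⊔ ldiv y x := sup_comm _ _

end ResiduatedLattice

theorem lpl3_implies_lpl {α : Type*} [ResiduatedLattice α]
    (hdistr : ∀ y z : α, 1 ⊓ (y ⊔ z) = (1 ⊓ y) ⊔ (1 ⊓ z))
    (hLPL3 : ∀ x y z : α, ldiv x (y ⊔ z) = ldiv x y ⊔ ldiv x z) (x y : α) :
    (ldiv x y ⊓ 1) ⊔ (ldiv y x ⊓ 1) = 1 := by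
  rw [inf_comm (ldiv x y), inf_comm (ldiv y x), ← hdistr]
  exact inf_eq_left.mpr (one_le_ldiv_sup_ldiv hLPL3 x y)
end

section
/- If a residuated lattice satisfies x\(y ∨ z) = (x\y) ∨ (x\z) and x\x = e, then its lattice reduct is distributive. -/
open ResiduatedLattice

/-!
For `d = a ⊓ (b ⊔ c)` and `s = b ⊔ c`, the map `f x = d * (s \ x)` preserves joins (by the
hypothesis on `\` and because left multiplication is a left adjoint), lies below the identity
(since `d ≤ s` and `s * (s \ x) ≤ x`) and sends `s` to `d` (since `s \ s = 1`). Hence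
`d = f b ⊔ f c`, where `f b ≤ f s ⊓ b ≤ a ⊓ b` and likewise for `c`.
-/

theorem inf_sup_le_of_supHom {β : Type*} [Lattice β] {a b c : β} (f : SupHom β β)
    (hf : f (b ⊔ c) = a ⊓ (b ⊔ c)) (hle : ∀ x, f x ≤ x) :
    a ⊓ (b ⊔ c) ≤ a ⊓ b ⊔ a ⊓ c := by
  have hfa : ∀ x, x ≤ b ⊔ c → f x ≤ a := fun x hx =>
    calc f x ≤ f (b ⊔ c) := OrderHomClass.mono f hx
      _ ≤ a := hf ▸ inf_le_left
  rw [← hf, map_sup]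
  exact sup_le_sup (le_inf (hfa b le_sup_left) (hle b)) (le_inf (hfa c le_sup_right) (hle c))

namespace ResiduatedLattice

variable {α : Type*} [ResiduatedLattice α]

theorem gc_mul_left (a : α) : GaloisConnection (a * ·) (ldiv a) :=
  fun b c => mul_le_iff_le_ldiv a b c

theorem gc_mul_right (b : α) : GaloisConnection (· * b) (rdiv · b) :=
  fun a c => mul_le_iff_le_rdiv a b c

def mulLdivSupHom (d s : α) (hs : ∀ y z : α, ldiv s (y ⊔ z) = ldiv s y ⊔ ldiv s z) :
    SupHom α α where
  toFun x := d * ldiv s x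
  map_sup' x y := by simp only [hs, (gc_mul_left d).l_sup]

variable {d s : α} {hs : ∀ y z : α, ldiv s (y ⊔ z) = ldiv s y ⊔ ldiv s z}

theorem mulLdivSupHom_self (hss : ldiv s s = 1) : mulLdivSupHom d s hs s = d := by
  change d * ldiv s s = d
  rw [hss, mul_one]

theorem mulLdivSupHom_le (hds : d ≤ s) (x : α) : mulLdivSupHom d s hs x ≤ x :=
  calc d * ldiv s x ≤ s * ldiv s x := (gc_mul_right _).monotone_l hds
    _ ≤ x := (gc_mul_left s).l_u_le x

end ResiduatedLattice

theorem lpl3_div_self_implies_distributive {α : Type*} [ResiduatedLattice α]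
    (hLPL3 : ∀ x y z : α, ldiv x (y ⊔ z) = ldiv x y ⊔ ldiv x z)
    (hdiv : ∀ x : α, ldiv x x = 1) (a b c : α) :
    a ⊓ (b ⊔ c) = (a ⊓ b) ⊔ (a ⊓ c) := by
  refine le_antisymm ?_ le_inf_sup
  exact inf_sup_le_of_supHom (mulLdivSupHom (a ⊓ (b ⊔ c)) (b ⊔ c) (hLPL3 _))
    (mulLdivSupHom_self (hdiv _)) (mulLdivSupHom_le inf_le_right)
end

section
/- A group G is nilpotent of class at most 2 (i.e., [[x,y],z] = e for all x,y,z in G) if and only if G satisfies the semigroup equation L_2 : q_2(x,y,z) = q_2(y,x,z), where q_2(x,y,z) = q_1(x,y)·z·q_1(y,x) with q_1(x,y) = xy; that is, if and only if xyzyx = yxzxy for all x,y,z in G. -/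
open scoped commutatorElement

theorem two_nilpotent_iff_malcev {G : Type*} [Group G] :
    (∀ x y z : G, ⁅⁅x, y⁆, z⁆ = 1) ↔ ∀ x y z : G, x * y * z * y * x = y * x * z * x * y := by
  constructor
  · intro h x y z
    have hc : ∀ g : G, ⁅y, x⁆ * g = g * ⁅y, x⁆ := fun g =>
      (commutatorElement_eq_one_iff_commute.mp (h y x g)).eq
    have e1 : y * x = ⁅y, x⁆ * (x * y) := by
      rw [commutatorElement_def]; group
    calc x * y * z * y * x = x * y * z * (⁅y, x⁆ * (x * y)) := by
          rw [← e1]; group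
      _ = x * y * (z * ⁅y, x⁆) * (x * y) := by group
      _ = x * y * (⁅y, x⁆ * z) * (x * y) := by rw [← hc]
      _ = x * (y * ⁅y, x⁆) * (z * (x * y)) := by group
      _ = x * (⁅y, x⁆ * y) * (z * (x * y)) := by rw [← hc]
      _ = (x * ⁅y, x⁆) * (y * z * (x * y)) := by group
      _ = (⁅y, x⁆ * x) * (y * z * (x * y)) := by rw [← hc]
      _ = (⁅y, x⁆ * (x * y)) * z * x * y := by group
      _ = y * x * z * x * y := by rw [← e1]
  · intro h x y z
    have comm : x * y * (y * x) = y * x * (x * y) := by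
      simpa [mul_assoc] using h x y 1
    have key : x * y * (z * (y * x)) = y * x * (z * (x * y)) := by
      simpa [mul_assoc] using h x y z
    rw [commutatorElement_eq_one_iff_commute]
    have goal : ⁅x, y⁆ * z = z * ⁅x, y⁆ := by
      rw [commutatorElement_def]
      apply mul_left_cancel (a := y * x)
      apply mul_right_cancel (b := y * x)
      calc (y * x) * (x * y * x⁻¹ * y⁻¹ * z) * (y * x)
          = (y * x * (x * y)) * (x⁻¹ * (y⁻¹ * (z * (y * x)))) := by group
        _ = (x * y * (y * x)) * (x⁻¹ * (y⁻¹ * (z * (y * x)))) := by rw [comm]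
        _ = x * y * (z * (y * x)) := by group
        _ = y * x * (z * (x * y)) := key
        _ = (y * x) * (z * (x * y * x⁻¹ * y⁻¹)) * (y * x) := by group
    exact goal
end

section
/- A torsion-free nilpotent group has unique roots: if aⁿ = bⁿ for some n ≥ 1, then a = b. -/
/-- Old Mathlib definition (removed since): no nontrivial element has finite order. -/
def Monoid.IsTorsionFree (G : Type*) [Monoid G] : Prop :=
  ∀ g : G, g ≠ 1 → ¬IsOfFinOrder g

/-!
Write `Z j` for the upper central series. In a torsion-free group every factor `Z (j+1) / Z j`
is torsion-free: if `x ∈ Z (j+1)` and `xⁿ ∈ Z j`, then each commutator `c = ⁅x, y⁆` lies in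
`Z j` and is central modulo `Z (j-1)`, so `⁅xⁿ, y⁆ ≡ cⁿ` there; hence `cⁿ ∈ Z (j-1)` and by
induction `c ∈ Z (j-1)`, i.e. `x ∈ Z j`.
Now let `aⁿ = bⁿ` and `z = b⁻¹a ∈ Z (j+1)`. Modulo `Z j`, `z` is central, so
`aⁿ = bⁿ zⁿ` there, whence `zⁿ ∈ Z j` and `z ∈ Z j`. Descending from `Z c = G` to `Z 0 = 1`
gives `z = 1`.
-/

open QuotientGroup
open scoped commutatorElement

theorem Monoid.IsTorsionFree.eq_one_of_pow_eq_one {M : Type*} [Monoid M]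
    (htf : Monoid.IsTorsionFree M) {x : M} {n : ℕ} (hn : n ≠ 0) (hx : x ^ n = 1) : x = 1 :=
  by_contra fun hx1 => htf x hx1 (isOfFinOrder_iff_pow_eq_one.mpr ⟨n, Nat.pos_of_ne_zero hn, hx⟩)

theorem commutatorElement_pow_left_of_commute {G : Type*} [Group G] {x y : G}
    (h : Commute ⁅x, y⁆ x) (n : ℕ) : ⁅x ^ n, y⁆ = ⁅x, y⁆ ^ n := by
  induction n with
  | zero => simp
  | succ n ih =>
    calc ⁅x ^ (n + 1), y⁆ = x * ⁅x ^ n, y⁆ * x⁻¹ * ⁅x, y⁆ := by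
          simp only [commutatorElement_def]; group
      _ = ⁅x, y⁆ ^ (n + 1) := by
          rw [ih, (h.pow_left n).symm.eq, mul_inv_cancel_right, pow_succ]

theorem QuotientGroup.mk_commutatorElement {G : Type*} [Group G] {N : Subgroup G} [N.Normal]
    (x y : G) : ((⁅x, y⁆ : G) : G ⧸ N) = ⁅(x : G ⧸ N), (y : G ⧸ N)⁆ :=
  map_commutatorElement (mk' N) x y

namespace Subgroup

variable {G : Type*} [Group G]

theorem commute_mk_of_mem_upperCentralSeries_succ {j : ℕ} {x : G}
    (hx : x ∈ upperCentralSeries G (j + 1)) (y : G) :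
    Commute (x : G ⧸ upperCentralSeries G j) (y : G ⧸ upperCentralSeries G j) := by
  rw [← commutatorElement_eq_one_iff_commute, ← mk_commutatorElement, eq_one_iff]
  exact hx y

theorem mem_upperCentralSeries_of_pow_mem (htf : Monoid.IsTorsionFree G) {n : ℕ} (hn : n ≠ 0) :
    ∀ {j : ℕ} {x : G}, x ∈ upperCentralSeries G (j + 1) → x ^ n ∈ upperCentralSeries G j →
      x ∈ upperCentralSeries G j
  | 0, x, _, hxn => by
    rw [upperCentralSeries_zero, mem_bot] at hxn ⊢
    exact htf.eq_one_of_pow_eq_one hn hxn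
  | j + 1, x, hx, hxn => by
    rw [mem_upperCentralSeries_succ_iff] at hx hxn ⊢
    intro y
    have hcn : ⁅x, y⁆ ^ n ∈ upperCentralSeries G j := by
      have hcomm := commute_mk_of_mem_upperCentralSeries_succ (hx y) x
      rw [mk_commutatorElement] at hcomm
      rw [← eq_one_iff, mk_pow, mk_commutatorElement, ← commutatorElement_pow_left_of_commute hcomm,
        ← mk_pow, ← mk_commutatorElement, eq_one_iff]
      exact hxn y
    exact mem_upperCentralSeries_of_pow_mem htf hn (hx y) hcn

theorem pow_mem_upperCentralSeries_of_pow_eq_pow {a b : G} {n j : ℕ} (h : a ^ n = b ^ n)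
    (hab : b⁻¹ * a ∈ upperCentralSeries G (j + 1)) :
    (b⁻¹ * a) ^ n ∈ upperCentralSeries G j := by
  have hcomm := commute_mk_of_mem_upperCentralSeries_succ hab b
  rw [← eq_one_iff, mk_pow]
  apply mul_left_cancel (a := (b : G ⧸ upperCentralSeries G j) ^ n)
  rw [mul_one, ← hcomm.symm.mul_pow, ← mk_mul, mul_inv_cancel_left, ← mk_pow, h, mk_pow]

theorem eq_of_pow_eq_pow_of_inv_mul_mem_upperCentralSeries (htf : Monoid.IsTorsionFree G)
    {a b : G} {n : ℕ} (hn : n ≠ 0) (h : a ^ n = b ^ n) :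
    ∀ {j : ℕ}, b⁻¹ * a ∈ upperCentralSeries G j → a = b
  | 0, hab => (inv_mul_eq_one.mp (mem_bot.mp hab)).symm
  | _ + 1, hab => eq_of_pow_eq_pow_of_inv_mul_mem_upperCentralSeries htf hn h <|
      mem_upperCentralSeries_of_pow_mem htf hn hab (pow_mem_upperCentralSeries_of_pow_eq_pow h hab)

end Subgroup

theorem torsion_free_nilpotent_unique_roots {G : Type*} [Group G]
    [Group.IsNilpotent G] (htf : Monoid.IsTorsionFree G)
    (a b : G) (n : ℕ) (hn : 1 ≤ n) (h : a ^ n = b ^ n) : a = b := by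
  obtain ⟨c, hc⟩ := Group.IsNilpotent.nilpotent G
  exact Subgroup.eq_of_pow_eq_pow_of_inv_mul_mem_upperCentralSeries htf (by omega) h
    (hc ▸ Subgroup.mem_top (b⁻¹ * a))
end

section
/- Every integral total order on a finitely generated monoid is residuated; that is, if ≤ is a total order on a finitely generated monoid M that is compatible with multiplication (a ≤ b implies cad ≤ cbd) and has the identity as greatest element, then (M, ≤) satisfies the ascending chain condition, and hence for all a, b the sets {c : ac ≤ b} and {c : ca ≤ b} have greatest elements. -/
/-!
Every element of `M` is the product of a word over a finite generating set, and since every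
element lies below `1`, inserting letters into a word can only decrease its product. By Higman's
lemma, every sequence of words has a word that embeds as a scattered subword into a later one, so
every sequence in `M` has a term lying above a later one: the reverse order is a well-quasi-order.
In particular `M` has no infinite ascending chain, so in the linear order every nonempty set has a
greatest element; the sets `{c | a * c ≤ b}` and `{c | c * a ≤ b}` contain `b`.
-/

/-- A noncommutative version of `Set.IsPWO.submonoid_closure`. -/
theorem Set.IsPWO.submonoid_closure_of_one_le {α : Type*} [Monoid α] [Preorder α]
    [MulLeftMono α] [MulRightMono α] {s : Set α} (hpos : ∀ x ∈ s, 1 ≤ x) (h : s.IsPWO) :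
    (Submonoid.closure s : Set α).IsPWO := by
  rw [Submonoid.closure_eq_image_prod]
  refine (h.partiallyWellOrderedOn_sublistForall₂ (· ≤ ·)).image_of_monotone_on ?_
  exact fun l₁ _ l₂ hl₂ h₁₂ => h₁₂.prod_le_prod' fun x hx => hpos x <| hl₂ x hx

theorem Monoid.FG.wellQuasiOrderedLE_orderDual {M : Type*} [Monoid M] [Preorder M]
    [MulLeftMono M] [MulRightMono M] (hfg : Monoid.FG M) (hle : ∀ a : M, a ≤ 1) :
    WellQuasiOrderedLE Mᵒᵈ := by
  obtain ⟨S, hS⟩ := hfg.fg_top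
  rw [← Set.isPWO_univ_iff]
  have hSpwo := Set.Finite.isPWO (α := Mᵒᵈ) S.finite_toSet
  have hclosure : Submonoid.closure (M := Mᵒᵈ) (S : Set M) = ⊤ := hS
  simpa [hclosure] using hSpwo.submonoid_closure_of_one_le fun x _ => (hle x : (1 : Mᵒᵈ) ≤ x)

theorem Set.Nonempty.exists_greatest_of_wellFoundedGT {α : Type*} [LinearOrder α]
    [WellFoundedGT α] {s : Set α} (hs : s.Nonempty) : ∃ c ∈ s, ∀ d ∈ s, d ≤ c := by
  obtain ⟨c, hc, hmax⟩ := wellFounded_gt.has_min s hs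
  exact ⟨c, hc, fun d hd => not_lt.1 (hmax d hd)⟩

theorem integral_total_order_on_fg_monoid_residuated {M : Type*} [Monoid M]
    [LinearOrder M] (hfg : Monoid.FG M)
    (hcompat : ∀ a b c d : M, a ≤ b → c * a * d ≤ c * b * d)
    (htop : ∀ a : M, a ≤ 1) :
    (¬∃ f : ℕ → M, StrictMono f) ∧
    (∀ a b : M, (∃ c : M, a * c ≤ b ∧ ∀ d : M, a * d ≤ b → d ≤ c) ∧
      (∃ c : M, c * a ≤ b ∧ ∀ d : M, d * a ≤ b → d ≤ c)) := by
  have : MulLeftMono M := ⟨fun c a b h => by simpa using hcompat a b c 1 h⟩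
  have : MulRightMono M := ⟨fun d a b h => by simpa using hcompat a b 1 d h⟩
  have := hfg.wellQuasiOrderedLE_orderDual htop
  have : WellFoundedGT M := (inferInstance : WellFoundedLT Mᵒᵈ)
  refine ⟨fun ⟨f, hf⟩ => not_strictMono_of_wellFoundedGT f hf, fun a b => ⟨?_, ?_⟩⟩
  · exact Set.Nonempty.exists_greatest_of_wellFoundedGT (s := {c | a * c ≤ b})
      ⟨b, mul_le_of_le_one_left' (htop a)⟩
  · exact Set.Nonempty.exists_greatest_of_wellFoundedGT (s := {c | c * a ≤ b})
      ⟨b, mul_le_of_le_one_right' (htop a)⟩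
end

section
/- A commutative cancellative monoid M with unique roots and no nontrivial invertible elements embeds into the negative cone of an Abelian lattice-ordered group. (Special version: a commutative cancellative torsion-free-quotient monoid M with M ∩ M⁻¹ = {e} inside its Grothendieck group G extends to the negative cone of some total order on G.) -/
/-!
By Zorn's lemma `M` lies in a maximal cone `C` of `G`. For `g ∉ C` maximality puts some
`g⁻ⁿ` (`n ≥ 1`) into `C`, since otherwise `C ⊔ powers g` would be a strictly larger cone. If
neither `g` nor `g⁻¹` were in `C`, we would get both `g ^ (k * l)` and its inverse in `C`, so
`g ^ (k * l) = 1` and `g = 1` by torsion-freeness. Hence `C ∪ C⁻¹ = G`, and `C` is the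
positive cone of a total order on `G`.
-/
namespace GroupCone

variable {G : Type*} [CommGroup G]

theorem exists_forall_le_of_directedOn {c : Set (GroupCone G)} (hc : DirectedOn (· ≤ ·) c)
    (hne : c.Nonempty) : ∃ D : GroupCone G, ∀ C ∈ c, C ≤ D := by
  have mem_common {a b : G} {A B : GroupCone G} (hA : A ∈ c) (hB : B ∈ c) (ha : a ∈ A)
      (hb : b ∈ B) : ∃ C ∈ c, a ∈ C ∧ b ∈ C := by
    obtain ⟨C, hC, hAC, hBC⟩ := hc A hA B hB
    exact ⟨C, hC, hAC ha, hBC hb⟩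
  refine ⟨{ carrier := ⋃ C ∈ c, (C : Set G)
            one_mem' := ?_, mul_mem' := ?_, eq_one_of_mem_of_inv_mem' := ?_ },
    fun C hC x hx => Set.mem_biUnion hC hx⟩
  · simp only [Set.mem_iUnion₂, SetLike.mem_coe]
    rintro a b ⟨A, hA, ha⟩ ⟨B, hB, hb⟩
    obtain ⟨C, hC, haC, hbC⟩ := mem_common hA hB ha hb
    exact ⟨C, hC, mul_mem haC hbC⟩
  · obtain ⟨C, hC⟩ := hne
    exact Set.mem_biUnion hC (one_mem C)
  · simp only [Set.mem_iUnion₂, SetLike.mem_coe]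
    rintro a ⟨A, hA, ha⟩ ⟨B, hB, hb⟩
    obtain ⟨C, -, haC, hbC⟩ := mem_common hA hB ha hb
    exact eq_one_of_mem_of_inv_mem haC hbC

theorem exists_le_isMax (C : GroupCone G) : ∃ D : GroupCone G, C ≤ D ∧ IsMax D :=
  zorn_le_nonempty_Ici₀ C
    (fun _ _ hc _ hy => exists_forall_le_of_directedOn hc.directedOn ⟨_, hy⟩) C le_rfl

theorem exists_le_mem_of_forall_pow_inv_notMem (C : GroupCone G) {g : G}
    (hg : ∀ n ≠ 0, (g ^ n)⁻¹ ∉ C) : ∃ D : GroupCone G, C ≤ D ∧ g ∈ D := by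
  refine ⟨{ toSubmonoid := C.toSubmonoid ⊔ Submonoid.powers g
            eq_one_of_mem_of_inv_mem' := ?_ },
    fun x hx => Submonoid.mem_sup_left hx,
    Submonoid.mem_sup_right (Submonoid.mem_powers g)⟩
  simp only [Submonoid.mem_carrier, Submonoid.mem_sup, Submonoid.mem_powers_iff]
  rintro _ ⟨a, ha, _, ⟨m, rfl⟩, rfl⟩ ⟨b, hb, _, ⟨n, rfl⟩, hab⟩
  have hprod : a * b * g ^ (m + n) = 1 := by
    rw [pow_add, mul_mul_mul_comm, hab, mul_inv_cancel]
  rcases Nat.eq_zero_or_pos (m + n) with hmn | hmn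
  · obtain ⟨rfl, rfl⟩ := Nat.add_eq_zero_iff.mp hmn
    rw [pow_zero, mul_one] at hprod ⊢
    exact C.eq_one_of_mem_of_inv_mem' ha (inv_eq_of_mul_eq_one_right hprod ▸ hb)
  · exact absurd (inv_eq_of_mul_eq_one_left hprod ▸ mul_mem ha hb) (hg _ hmn.ne')

theorem exists_pow_inv_mem_of_isMax {C : GroupCone G} (hC : IsMax C) {g : G} (hg : g ∉ C) :
    ∃ n ≠ 0, (g ^ n)⁻¹ ∈ C := by
  by_contra! h
  obtain ⟨D, hCD, hgD⟩ := C.exists_le_mem_of_forall_pow_inv_notMem h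
  exact hg (hC hCD hgD)

theorem hasMemOrInvMem_of_isMax [IsMulTorsionFree G] {C : GroupCone G} (hC : IsMax C) :
    HasMemOrInvMem C where
  mem_or_inv_mem g := by
    by_contra! ⟨hg, hg'⟩
    obtain ⟨k, hk, hgk⟩ := exists_pow_inv_mem_of_isMax hC hg
    obtain ⟨l, hl, hgl⟩ := exists_pow_inv_mem_of_isMax hC hg'
    rw [inv_pow, inv_inv] at hgl
    have hkl : g ^ (k * l) = 1 := by
      refine eq_one_of_mem_of_inv_mem (C := C) ?_ ?_
      · simpa only [mul_comm k, pow_mul] using pow_mem hgl k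
      · simpa only [pow_mul, inv_pow] using pow_mem hgk l
    rw [pow_eq_one_iff_left (mul_ne_zero hk hl)] at hkl
    exact hg (hkl ▸ one_mem C)

end GroupCone

theorem monoid_extends_to_negative_cone_of_total_order {G : Type*} [CommGroup G]
    (htf : ∀ g : G, g ≠ 1 → ¬IsOfFinOrder g) (M : Submonoid G)
    (hMinv : ∀ x : G, x ∈ M → x⁻¹ ∈ M → x = 1) :
    ∃ le : G → G → Prop,
      (∀ a : G, le a a) ∧
      (∀ a b : G, le a b → le b a → a = b) ∧
      (∀ a b c : G, le a b → le b c → le a c) ∧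
      (∀ a b : G, le a b ∨ le b a) ∧
      (∀ a b c : G, le a b → le (c * a) (c * b)) ∧
      (∀ m : G, m ∈ M → le m 1) := by
  classical
  have : IsMulTorsionFree G := IsMulTorsionFree.of_not_isOfFinOrder htf
  obtain ⟨C, hMC, hC⟩ := GroupCone.exists_le_isMax ⟨M, hMinv _⟩
  have : HasMemOrInvMem C := GroupCone.hasMemOrInvMem_of_isMax hC
  let := LinearOrder.mkOfGroupCone C
  have : IsOrderedMonoid G := IsOrderedMonoid.mkOfCone C
  -- `M` sits in the positive cone `C`, so it is the negative cone of the reversed order.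
  refine ⟨fun a b => b ≤ a, le_refl, fun a b h h' => le_antisymm h' h,
    fun a b c h h' => h'.trans h, fun a b => le_total b a,
    fun a b c h => mul_le_mul_right h c, fun m hm => ?_⟩
  simpa using hMC hm
end
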